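/- arXiv:1608.04006 — 5 statements merged into one kernel-verified Lean document; each statement's English description precedes it below -/
import Mathlib

section
/- For every positive integer n, 15·∑_{k=1}^{n} k^8 = (5(n(n+1))^3 - 10(n(n+1))^2 + 9n(n+1) - 3) · ∑_{k=1}^{n} k^2. -/
/-! Faulhaber's closed forms for the sums of squares and of eighth powers turn the identity,
after multiplying by 6, into a polynomial identity in `n`. -/

open Finset

section Faulhaber

variable {R : Type*} [CommRing R]

theorem six_mul_sum_Icc_pow_two (n : ℕ) :
    6 * ∑ k ∈ Icc 1 n, (k : R) ^ 2 = n * (n + 1) * (2 * n + 1) := by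
  induction n with
  | zero => simp
  | succ m ih =>
    rw [sum_Icc_succ_top (by omega), mul_add, ih]
    push_cast
    ring

theorem ninety_mul_sum_Icc_pow_eight (n : ℕ) :
    90 * ∑ k ∈ Icc 1 n, (k : R) ^ 8 =
      10 * n ^ 9 + 45 * n ^ 8 + 60 * n ^ 7 - 42 * n ^ 5 + 20 * n ^ 3 - 3 * n := by
  induction n with
  | zero => simp
  | succ m ih =>
    rw [sum_Icc_succ_top (by omega), mul_add, ih]
    push_cast
    ring

end Faulhaber

theorem stmt_7_general (n : ℕ) :
    15 * ∑ k ∈ Finset.Icc 1 n, (k : ℤ) ^ 8 =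
      (5 * (n * (n + 1)) ^ 3 - 10 * (n * (n + 1)) ^ 2 + 9 * (n * (n + 1)) - 3) *
        ∑ k ∈ Finset.Icc 1 n, (k : ℤ) ^ 2 := by
  set m : ℤ := n * (n + 1)
  apply mul_left_cancel₀ (show (6 : ℤ) ≠ 0 by norm_num)
  linear_combination ninety_mul_sum_Icc_pow_eight (R := ℤ) n -
    (5 * m ^ 3 - 10 * m ^ 2 + 9 * m - 3) * six_mul_sum_Icc_pow_two (R := ℤ) n

theorem stmt_7 (n : ℕ) (hn : 0 < n) :
    15 * ∑ k ∈ Finset.Icc 1 n, (k : ℤ) ^ 8 =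
      (5 * (n * (n + 1)) ^ 3 - 10 * (n * (n + 1)) ^ 2 + 9 * (n * (n + 1)) - 3) *
        ∑ k ∈ Finset.Icc 1 n, (k : ℤ) ^ 2 :=
  stmt_7_general n
end

section
/- For every positive integer n, 11·∑_{k=1}^{n} k^{10} = (48·T^4 - 80·T^3 + 68·T^2 - 5·(6T - 1)) · ∑_{k=1}^{n} k^2, where T = n(n+1)/2. -/
/-! Both power sums have Faulhaber closed forms, so after substituting them and `T` the identity
becomes a polynomial identity in `n`. -/

open Finset

section PowerSums

variable {K : Type*} [Field K] [CharZero K]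

theorem sum_Icc_sq (n : ℕ) :
    ∑ k ∈ Icc 1 n, (k : K) ^ 2 = n * (n + 1) * (2 * n + 1) / 6 := by
  induction n with
  | zero => simp
  | succ m ih =>
    rw [sum_Icc_succ_top (by omega), ih]
    push_cast
    ring

theorem sum_Icc_pow_ten (n : ℕ) :
    ∑ k ∈ Icc 1 n, (k : K) ^ 10 =
      (6 * n ^ 11 + 33 * n ^ 10 + 55 * n ^ 9 - 66 * n ^ 7 + 66 * n ^ 5 - 33 * n ^ 3 + 5 * n) / 66 := by
  induction n with
  | zero => simp
  | succ m ih =>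
    rw [sum_Icc_succ_top (by omega), ih]
    push_cast
    ring

end PowerSums

theorem stmt_11_general (n : ℕ) (T : ℚ) (hT : T = n * (n + 1) / 2) :
    11 * ∑ k ∈ Finset.Icc 1 n, (k : ℚ) ^ 10 =
      (48 * T ^ 4 - 80 * T ^ 3 + 68 * T ^ 2 - 5 * (6 * T - 1)) *
        ∑ k ∈ Finset.Icc 1 n, (k : ℚ) ^ 2 := by
  rw [sum_Icc_pow_ten, sum_Icc_sq, hT]
  ring

theorem stmt_11 (n : ℕ) (hn : 0 < n) (T : ℚ) (hT : T = n * (n + 1) / 2) :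
    11 * ∑ k ∈ Finset.Icc 1 n, (k : ℚ) ^ 10 =
      (48 * T ^ 4 - 80 * T ^ 3 + 68 * T ^ 2 - 5 * (6 * T - 1)) *
        ∑ k ∈ Finset.Icc 1 n, (k : ℚ) ^ 2 :=
  stmt_11_general n T hT
end

section
/- For every positive integer n, 6·∑_{k=1}^{n} k^{11} = (32·T^4 - 64·T^3 + 68·T^2 - 10·(4T - 1)) · ∑_{k=1}^{n} k^3, where T = n(n+1)/2. -/
open Finset

section

variable {K : Type*} [Field K] [CharZero K]

theorem sum_Icc_pow_three (n : ℕ) :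
    ∑ k ∈ Icc 1 n, (k : K) ^ 3 = ((n : K) * (n + 1) / 2) ^ 2 := by
  induction n with
  | zero => simp
  | succ m ih =>
    rw [sum_Icc_succ_top (by omega), ih]
    push_cast
    ring

theorem six_mul_sum_Icc_pow_eleven (n : ℕ) :
    6 * ∑ k ∈ Icc 1 n, (k : K) ^ 11 =
      ((n : K) * (n + 1) / 2) ^ 2 *
        (32 * ((n : K) * (n + 1) / 2) ^ 4 - 64 * ((n : K) * (n + 1) / 2) ^ 3 +
          68 * ((n : K) * (n + 1) / 2) ^ 2 - 40 * ((n : K) * (n + 1) / 2) + 10) := by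
  induction n with
  | zero => simp
  | succ m ih =>
    rw [sum_Icc_succ_top (by omega), mul_add, ih]
    push_cast
    ring

end

theorem stmt_12_general (n : ℕ) (T : ℚ) (hT : T = n * (n + 1) / 2) :
    6 * ∑ k ∈ Finset.Icc 1 n, (k : ℚ) ^ 11 =
      (32 * T ^ 4 - 64 * T ^ 3 + 68 * T ^ 2 - 10 * (4 * T - 1)) *
        ∑ k ∈ Finset.Icc 1 n, (k : ℚ) ^ 3 := by
  rw [six_mul_sum_Icc_pow_eleven, sum_Icc_pow_three, ← hT]
  ring

theorem stmt_12 (n : ℕ) (hn : 0 < n) (T : ℚ) (hT : T = n * (n + 1) / 2) :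
    6 * ∑ k ∈ Finset.Icc 1 n, (k : ℚ) ^ 11 =
      (32 * T ^ 4 - 64 * T ^ 3 + 68 * T ^ 2 - 10 * (4 * T - 1)) *
        ∑ k ∈ Finset.Icc 1 n, (k : ℚ) ^ 3 :=
  stmt_12_general n T hT
end

section
/- For every positive integer m, there exists a polynomial E with rational coefficients such that for all positive integers n, ∑_{k=1}^{n} k^{2m} = E(n(n+1)/2) · ∑_{k=1}^{n} k^2. -/
/-!
Let `B` be the Bernoulli polynomial of index `2m + 1`. Faulhaber's formula gives
`B(N) = (2m + 1) ∑_{k < N} k^{2m}`, and the reflection `B(1 - x) = -B(x)` makes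
`y ↦ B(y + 1/2)` an odd polynomial, hence of the form `y W(y²)`. It vanishes at `y = 1/2`
(as `B(1) = 0`), so `W(y²)` has the factor `y² - 1/4`. At `y = n + 1/2` this gives
`y (y² - 1/4) = n(n + 1)(2n + 1)/2 = 3 ∑_{k ≤ n} k²` and `y² = 2T + 1/4`
with `T = n(n + 1)/2`.
-/

open Polynomial Finset

theorem Finset.sum_Icc_one_eq_sum_range_succ {M : Type*} [AddCommMonoid M] {f : ℕ → M}
    (hf : f 0 = 0) (n : ℕ) : ∑ k ∈ Icc 1 n, f k = ∑ k ∈ range (n + 1), f k := by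
  rw [range_eq_Ico, sum_eq_sum_Ico_succ_bot n.succ_pos, hf, zero_add]
  rfl

theorem Finset.sum_Icc_one_sq (n : ℕ) :
    ∑ k ∈ Icc 1 n, (k : ℚ) ^ 2 = n * (n + 1) * (2 * n + 1) / 6 := by
  induction n with
  | zero => simp
  | succ n ih =>
    rw [sum_Icc_succ_top (Nat.le_add_left 1 n), ih]
    push_cast
    ring

namespace Polynomial

section OddPolynomial

variable {R : Type*} [CommRing R] [NoZeroDivisors R] [CharZero R] {P : R[X]}

theorem coeff_eq_zero_of_comp_neg_X_eq_neg (hP : P.comp (-X) = -P) {k : ℕ} (hk : Even k) :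
    P.coeff k = 0 := by
  have h := congrArg (coeff · k) hP
  simp only [← C_1, ← C_neg, ← neg_one_mul (X : R[X])] at h
  rw [comp_C_mul_X_coeff, hk.neg_one_pow, mul_one, coeff_neg] at h
  exact self_eq_neg.mp h

theorem exists_eq_X_mul_expand_two_of_comp_neg_X_eq_neg (hP : P.comp (-X) = -P) :
    ∃ W : R[X], P = X * expand R 2 W := by
  refine ⟨contract 2 P.divX, ?_⟩
  ext (_ | k)
  · simp [coeff_eq_zero_of_comp_neg_X_eq_neg hP Even.zero]
  · rw [coeff_X_mul, coeff_expand two_pos, coeff_contract two_ne_zero]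
    split_ifs with h
    · rw [Nat.div_mul_cancel h, coeff_divX]
    · exact coeff_eq_zero_of_comp_neg_X_eq_neg hP
        (Nat.even_add_one.mpr (by rwa [even_iff_two_dvd]))

theorem exists_eval_eq_mul_sq_sub_sq_of_comp_neg_X_eq_neg (hP : P.comp (-X) = -P) {a : R}
    (ha : a ≠ 0) (hPa : P.eval a = 0) :
    ∃ V : R[X], ∀ y, P.eval y = y * (y ^ 2 - a ^ 2) * V.eval (y ^ 2) := by
  obtain ⟨W, rfl⟩ := exists_eq_X_mul_expand_two_of_comp_neg_X_eq_neg hP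
  have hW : W.IsRoot (a ^ 2) := by simpa [ha] using hPa
  obtain ⟨V, rfl⟩ := dvd_iff_isRoot.mpr hW
  exact ⟨V, fun y => by simp only [eval_mul, eval_X, expand_eval, eval_sub, eval_C]; ring⟩

end OddPolynomial

theorem bernoulli_comp_X_add_half_comp_neg_X {n : ℕ} (hn : Odd n) :
    ((bernoulli n).comp (X + C (1 / 2))).comp (-X) = -(bernoulli n).comp (X + C (1 / 2)) := by
  refine Polynomial.funext fun y => ?_
  have h := bernoulli_eval_one_sub n (y + 1 / 2)
  rw [hn.neg_one_pow, neg_one_mul, show 1 - (y + 1 / 2) = -y + 1 / 2 by ring] at h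
  simpa using h

theorem bernoulli_two_mul_add_one_eval_natCast {m : ℕ} (hm : 0 < m) (N : ℕ) :
    (bernoulli (2 * m + 1)).eval (N : ℚ) =
      (2 * m + 1) * ∑ k ∈ range N, (k : ℚ) ^ (2 * m) := by
  have h := sum_range_pow_eq_bernoulli_sub N (2 * m)
  rw [Nat.succ_eq_add_one, _root_.bernoulli_eq_zero_of_odd (odd_two_mul_add_one m) (by omega),
    sub_zero] at h
  push_cast at h
  exact h.symm

end Polynomial

theorem stmt_13 (m : ℕ) (hm : 0 < m) :
    ∃ E : Polynomial ℚ, ∀ n : ℕ, 0 < n →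
      ∑ k ∈ Finset.Icc 1 n, (k : ℚ) ^ (2 * m) =
        E.eval ((n : ℚ) * (n + 1) / 2) * ∑ k ∈ Finset.Icc 1 n, (k : ℚ) ^ 2 := by
  have hB := bernoulli_two_mul_add_one_eval_natCast hm
  obtain ⟨V, hV⟩ := exists_eval_eq_mul_sq_sub_sq_of_comp_neg_X_eq_neg
    (bernoulli_comp_X_add_half_comp_neg_X (odd_two_mul_add_one m)) (a := 1 / 2) (by norm_num)
    (by rw [eval_comp, eval_add, eval_X, eval_C, add_halves, ← Nat.cast_one, hB 1]; simp [hm.ne'])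
  refine ⟨C (3 / (2 * m + 1 : ℚ)) * V.comp (C 2 * X + C (1 / 4)), fun n _ => ?_⟩
  have hfac := hV (n + 1 / 2)
  rw [eval_comp, eval_add, eval_X, eval_C, add_assoc, add_halves, ← Nat.cast_succ, hB] at hfac
  rw [sum_Icc_one_eq_sum_range_succ (by simp [hm.ne']), sum_Icc_one_sq]
  simp only [eval_mul, eval_C, eval_comp, eval_add, eval_X]
  rw [show 2 * ((n : ℚ) * (n + 1) / 2) + 1 / 4 = (n + 1 / 2) ^ 2 by ring]
  generalize V.eval (((n : ℚ) + 1 / 2) ^ 2) = v at hfac ⊢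
  rw [← mul_right_inj' (by positivity : (2 * m + 1 : ℚ) ≠ 0), hfac]
  field_simp
  ring
end

section
/- For every integer m ≥ 1, there exists a polynomial O with rational coefficients such that for all positive integers n, ∑_{k=1}^{n} k^{2m+1} = O(n(n+1)/2) · ∑_{k=1}^{n} k^3. -/
open Finset Polynomial

/-!
With `T k = k (k + 1) / 2`, the difference `(2 T k) ^ (m + 1) - (2 T (k - 1)) ^ (m + 1)` equals
`k ^ (m + 1) ((k + 1) ^ (m + 1) - (k - 1) ^ (m + 1))`, a combination of the odd powers
`k ^ (2m + 1), k ^ (2m - 1), …` whose leading coefficient is `2 (m + 1)`. Summing over `k`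
telescopes: `2 ^ (m + 1) T ^ (m + 1)` is `2 (m + 1)` times the sum of `(2m + 1)`-th powers plus a
combination of sums of lower odd powers. By strong induction on `m`, every such sum with `m ≥ 1`
therefore lies in the `ℚ`-space of functions `O (T n) * T n ^ 2`, and the sum of cubes is `T ^ 2`.
-/

theorem mul_add_one_pow_sub_sub_one_mul_pow {R : Type*} [CommRing R] (x : R) (N : ℕ) :
    (x * (x + 1)) ^ N - ((x - 1) * x) ^ N =
      ∑ j ∈ range (N + 1), (1 - (-1) ^ (N - j)) * N.choose j * x ^ (N + j) := by
  have hsub : (x - 1) ^ N = ∑ j ∈ range (N + 1), x ^ j * (-1) ^ (N - j) * N.choose j := by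
    rw [sub_eq_add_neg, add_pow]
  rw [mul_pow, mul_pow, mul_comm (x ^ N), ← sub_mul, add_pow, hsub, ← sum_sub_distrib, sum_mul]
  refine sum_congr rfl fun j _ => ?_
  simp only [one_pow, mul_one]
  ring

theorem mul_add_one_pow_eq_sum {R : Type*} [CommRing R] {N : ℕ} (hN : N ≠ 0) (n : ℕ) :
    ((n : R) * (n + 1)) ^ N =
      ∑ j ∈ range (N + 1),
        (1 - (-1) ^ (N - j)) * N.choose j * ∑ k ∈ Icc 1 n, (k : R) ^ (N + j) := by
  induction n with
  | zero => simp [hN]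
  | succ n ih =>
    simp only [sum_Icc_succ_top (Nat.le_add_left 1 n), mul_add, sum_add_distrib, ← ih,
      ← mul_add_one_pow_sub_sub_one_mul_pow]
    push_cast
    ring

def triangular (n : ℕ) : ℚ := n * (n + 1) / 2

def powerSum (p n : ℕ) : ℚ := ∑ k ∈ Icc 1 n, (k : ℚ) ^ p

theorem powerSum_three : powerSum 3 = triangular ^ 2 := by
  funext n
  induction n with
  | zero => simp [powerSum, triangular]
  | succ n ih =>
    simp only [powerSum, Pi.pow_apply, triangular] at ih ⊢
    rw [sum_Icc_succ_top (Nat.le_add_left 1 n), ih]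
    push_cast
    ring

theorem two_pow_smul_triangular_pow {N : ℕ} (hN : N ≠ 0) :
    (2 : ℚ) ^ N • triangular ^ N =
      ∑ j ∈ range (N + 1), ((1 - (-1) ^ (N - j)) * N.choose j : ℚ) • powerSum (N + j) := by
  funext n
  simp only [Pi.smul_apply, Pi.pow_apply, Finset.sum_apply, smul_eq_mul, triangular, powerSum]
  rw [← mul_pow, mul_div_cancel₀ _ two_ne_zero, mul_add_one_pow_eq_sum hN]

def triangularSqMultiples : Submodule ℚ (ℕ → ℚ) where
  carrier := {f | ∃ O : ℚ[X], ∀ n, f n = O.eval (triangular n) * triangular n ^ 2}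
  add_mem' := by
    rintro f g ⟨O, hf⟩ ⟨P, hg⟩
    exact ⟨O + P, fun n => by simp [hf, hg, add_mul]⟩
  zero_mem' := ⟨0, by simp⟩
  smul_mem' := by
    rintro c f ⟨O, hf⟩
    exact ⟨C c * O, fun n => by simp [hf, mul_assoc]⟩

theorem triangular_pow_mem {k : ℕ} (hk : 2 ≤ k) : triangular ^ k ∈ triangularSqMultiples :=
  ⟨X ^ (k - 2), fun n => by simp [← pow_add, Nat.sub_add_cancel hk]⟩

theorem powerSum_odd_mem {m : ℕ} (hm : 1 ≤ m) :
    powerSum (2 * m + 1) ∈ triangularSqMultiples := by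
  induction m using Nat.strong_induction_on with
  | _ m ih =>
  have hc : (2 * (m + 1) : ℚ) ≠ 0 := by positivity
  have hsplit : (2 * (m + 1) : ℚ) • powerSum (2 * m + 1) =
      (2 : ℚ) ^ (m + 1) • triangular ^ (m + 1) -
        ∑ j ∈ (range (m + 2)).erase m,
          ((1 - (-1) ^ (m + 1 - j)) * (m + 1).choose j : ℚ) • powerSum (m + 1 + j) := by
    rw [two_pow_smul_triangular_pow m.add_one_ne_zero,
      ← add_sum_erase _ _ (mem_range.2 (show m < m + 2 by omega)), add_sub_cancel_right,
      Nat.add_sub_cancel_left, Nat.choose_succ_self_right, show m + 1 + m = 2 * m + 1 by omega]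
    norm_num
  rw [← Submodule.smul_mem_iff _ hc, hsplit]
  refine sub_mem (Submodule.smul_mem _ _ (triangular_pow_mem (by omega))) (sum_mem fun j hj => ?_)
  rcases Nat.even_or_odd (m + 1 - j) with he | ho
  · simp [he.neg_one_pow]
  · obtain ⟨hjm, hj⟩ := mem_erase.1 hj
    rw [mem_range] at hj
    obtain ⟨l, hl⟩ := ho
    rw [show m + 1 + j = 2 * ((m + j) / 2) + 1 by omega]
    exact Submodule.smul_mem _ _ (ih _ (by omega) (by omega))

theorem stmt_14 (m : ℕ) (hm : 1 ≤ m) :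
    ∃ O : Polynomial ℚ, ∀ n : ℕ, 0 < n →
      ∑ k ∈ Finset.Icc 1 n, (k : ℚ) ^ (2 * m + 1) =
        O.eval ((n : ℚ) * (n + 1) / 2) * ∑ k ∈ Finset.Icc 1 n, (k : ℚ) ^ 3 := by
  obtain ⟨O, hO⟩ := powerSum_odd_mem hm
  refine ⟨O, fun n _ => ?_⟩
  have h3 := congrFun powerSum_three n
  simp only [powerSum, triangular, Pi.pow_apply] at hO h3
  rw [hO n, h3]
end
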